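/- Suppose a ∈ ℝ^n and B ∈ ℝ^{n×n²} satisfy e = a + B(e ⊗ e), x* ∈ ℝ^n satisfies x* = a + B(x* ⊗ x*) with 0 ≤ x* < e entrywise, and L = I − B(x* ⊗ I + I ⊗ x*) is invertible. Let ã ∈ ℝ^n and B̃ ∈ ℝ^{n×n²} satisfy e = ã + B̃(e ⊗ e), and set ΔB = B̃ − B, δ = ‖ΔB‖, ℓ = ‖L⁻¹‖, b̃ = ‖B̃‖, d = ‖x* ⊗ x* − e ⊗ e‖. Assume ‖x*‖·δ + √(b̃·d·δ) ≤ 1/(2ℓ) and 2ℓδ‖x*‖ + √((1 − 2ℓδ‖x*‖)² − 4ℓ²b̃dδ) > max{ 1 − 2ℓb̃(1 − ‖x*‖), 1 − 2ℓb̃(1 − ‖e − x*‖) }. If the perturbed QVE x = ã + B̃(x ⊗ x) has at most one solution x with 0 ≤ x < e, and x̃* is a solution of the perturbed QVE with 0 ≤ x̃* < e, then ‖x̃* − x*‖ ≤ ξ*, where ξ* = 2ℓdδ / (1 − 2ℓδ‖x*‖ + √((1 − 2ℓδ‖x*‖)² − 4ℓ²b̃dδ)). -/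

import Mathlib

open Matrix

noncomputable section

/-- Decode an index `p ∈ Fin (n*n)` (row-major: `p = n*i + j`) into the pair `(i, j)`. -/
def kronDecode {n : ℕ} (p : Fin (n * n)) : Fin n × Fin n :=
  ⟨⟨(p : ℕ) / n, Nat.div_lt_of_lt_mul p.isLt⟩,
   ⟨(p : ℕ) % n, Nat.mod_lt _ (by
      rcases Nat.eq_zero_or_pos n with h | h
      · exact absurd p.isLt (by simp [h])
      · exact h)⟩⟩

/-- Kronecker product of two vectors in `ℝ^n`, as a vector in `ℝ^(n²)`:
`(u ⊗ v)_{n(i-1)+j} = u_i v_j` (row-major). -/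
def kron {n : ℕ} (u v : Fin n → ℝ) : Fin (n * n) → ℝ :=
  fun p => u (kronDecode p).1 * v (kronDecode p).2

/-- Kronecker product `u ⊗ I` of a vector `u ∈ ℝ^n` with the `n×n` identity:
an `n²×n` matrix with entry `u_i · δ_{jk}` at row `(i,j)`, column `k`. -/
def kronVecId {n : ℕ} (u : Fin n → ℝ) : Matrix (Fin (n * n)) (Fin n) ℝ :=
  fun p k => u (kronDecode p).1 * (if (kronDecode p).2 = k then (1 : ℝ) else 0)

/-- Kronecker product `I ⊗ u` of the `n×n` identity with a vector `u ∈ ℝ^n`: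
an `n²×n` matrix with entry `δ_{ik} · u_j` at row `(i,j)`, column `k`. -/
def kronIdVec {n : ℕ} (u : Fin n → ℝ) : Matrix (Fin (n * n)) (Fin n) ℝ :=
  fun p k => (if (kronDecode p).1 = k then (1 : ℝ) else 0) * u (kronDecode p).2

/-- The operator ∞-norm of a real matrix: the maximum absolute row sum.
(The corresponding vector norm on `Fin m → ℝ` is the sup norm `‖·‖`.) -/
def matNorm {m k : ℕ} (M : Matrix (Fin m) (Fin k) ℝ) : ℝ :=
  ⨆ i, ∑ j, |M i j|

/-!
The perturbed solution is the limit of the chord iteration `x ↦ x + L⁻¹ (ã + B̃ (x ⊗ x) - x)`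
started at `x*` (Newton's method with the Jacobian frozen at the unperturbed solution). Its
defect at `x*` is at most `ℓδd`, and between two points at distances `r, r'` from `x*` it is
Lipschitz with constant `2ℓδ‖x*‖ + ℓb̃ (r + r')`. Hence, as in Kantorovich's theorem, the scalar
sequence `t₀ = 0`, `t_{k+1} = ℓδd + 2ℓδ‖x*‖ t_k + ℓb̃ t_k²` majorizes the iterates, and it stays
below the smaller root `ξ*` of `ℓb̃ t² - (1 - 2ℓδ‖x*‖) t + ℓδd`, which is real by the first
condition. So the iterates converge to a solution within `ξ*` of `x*`. The second condition
amounts to `ξ* < 1 - ‖x*‖` and `ξ* < 1 - ‖e - x*‖`, which keeps this solution in `[0, e)`, and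
uniqueness identifies it with `x̃*`.
-/

open Filter Topology

section Majorant

variable {c₀ c₁ c₂ ξ : ℝ}

def majorantSeq (c₀ c₁ c₂ : ℝ) : ℕ → ℝ
  | 0 => 0
  | k + 1 => c₀ + c₁ * majorantSeq c₀ c₁ c₂ k + c₂ * majorantSeq c₀ c₁ c₂ k ^ 2

lemma majorantSeq_succ (c₀ c₁ c₂ : ℝ) (k : ℕ) :
    majorantSeq c₀ c₁ c₂ (k + 1) =
      c₀ + c₁ * majorantSeq c₀ c₁ c₂ k + c₂ * majorantSeq c₀ c₁ c₂ k ^ 2 :=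
  rfl

lemma quadratic_le_quadratic (hc₁ : 0 ≤ c₁) (hc₂ : 0 ≤ c₂) {u v : ℝ} (hu : 0 ≤ u)
    (huv : u ≤ v) : c₀ + c₁ * u + c₂ * u ^ 2 ≤ c₀ + c₁ * v + c₂ * v ^ 2 := by
  gcongr

lemma majorantSeq_nonneg (hc₀ : 0 ≤ c₀) (hc₁ : 0 ≤ c₁) (hc₂ : 0 ≤ c₂) :
    ∀ k, 0 ≤ majorantSeq c₀ c₁ c₂ k
  | 0 => le_rfl
  | k + 1 => by
    have := majorantSeq_nonneg hc₀ hc₁ hc₂ k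
    rw [majorantSeq]
    positivity

lemma majorantSeq_le_succ (hc₀ : 0 ≤ c₀) (hc₁ : 0 ≤ c₁) (hc₂ : 0 ≤ c₂) :
    ∀ k, majorantSeq c₀ c₁ c₂ k ≤ majorantSeq c₀ c₁ c₂ (k + 1)
  | 0 => by simpa [majorantSeq] using hc₀
  | k + 1 => quadratic_le_quadratic hc₁ hc₂ (majorantSeq_nonneg hc₀ hc₁ hc₂ k)
    (majorantSeq_le_succ hc₀ hc₁ hc₂ k)

lemma majorantSeq_le (hc₀ : 0 ≤ c₀) (hc₁ : 0 ≤ c₁) (hc₂ : 0 ≤ c₂) (hξ₀ : 0 ≤ ξ)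
    (hξ : c₀ + c₁ * ξ + c₂ * ξ ^ 2 ≤ ξ) : ∀ k, majorantSeq c₀ c₁ c₂ k ≤ ξ
  | 0 => hξ₀
  | k + 1 => (quadratic_le_quadratic hc₁ hc₂ (majorantSeq_nonneg hc₀ hc₁ hc₂ k)
    (majorantSeq_le hc₀ hc₁ hc₂ hξ₀ hξ k)).trans hξ

variable {X : Type*} [MetricSpace X] {F : X → X} {x₀ : X}

lemma dist_iterate_le_majorantSeq (hc₀ : 0 ≤ c₀) (hc₁ : 0 ≤ c₁) (hc₂ : 0 ≤ c₂)
    (hx₀ : dist (F x₀) x₀ ≤ c₀)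
    (hF : ∀ x x', dist (F x) (F x') ≤ (c₁ + c₂ * (dist x x₀ + dist x' x₀)) * dist x x') :
    ∀ k, dist (F^[k] x₀) x₀ ≤ majorantSeq c₀ c₁ c₂ k ∧
      dist (F^[k + 1] x₀) (F^[k] x₀) ≤ majorantSeq c₀ c₁ c₂ (k + 1) - majorantSeq c₀ c₁ c₂ k
  | 0 => ⟨by simp [majorantSeq], by simpa [majorantSeq] using hx₀⟩
  | k + 1 => by
    obtain ⟨ih₁, ih₂⟩ := dist_iterate_le_majorantSeq hc₀ hc₁ hc₂ hx₀ hF k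
    have hsucc (j : ℕ) : F^[j + 1] x₀ = F (F^[j] x₀) := Function.iterate_succ_apply' F j x₀
    have hc : 0 ≤ c₁ + c₂ * (majorantSeq c₀ c₁ c₂ (k + 1) + majorantSeq c₀ c₁ c₂ k) := by
      have := majorantSeq_nonneg hc₀ hc₁ hc₂ k
      have := majorantSeq_nonneg hc₀ hc₁ hc₂ (k + 1)
      positivity
    set t := majorantSeq c₀ c₁ c₂
    have hdist : dist (F^[k + 1] x₀) x₀ ≤ t (k + 1) := by
      linarith [dist_triangle (F^[k + 1] x₀) (F^[k] x₀) x₀]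
    refine ⟨hdist, ?_⟩
    calc dist (F^[k + 1 + 1] x₀) (F^[k + 1] x₀)
        = dist (F (F^[k + 1] x₀)) (F (F^[k] x₀)) := by rw [hsucc (k + 1), hsucc k]
      _ ≤ (c₁ + c₂ * (dist (F^[k + 1] x₀) x₀ + dist (F^[k] x₀) x₀)) *
            dist (F^[k + 1] x₀) (F^[k] x₀) := hF _ _
      _ ≤ (c₁ + c₂ * (t (k + 1) + t k)) * (t (k + 1) - t k) := by gcongr
      _ = t (k + 1 + 1) - t (k + 1) := by
        simp only [t, majorantSeq_succ]
        ring

theorem exists_fixedPoint_dist_le_of_quadratic_majorant [CompleteSpace X]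
    (hc₀ : 0 ≤ c₀) (hc₁ : 0 ≤ c₁) (hc₂ : 0 ≤ c₂) (hξ₀ : 0 ≤ ξ)
    (hξ : c₀ + c₁ * ξ + c₂ * ξ ^ 2 ≤ ξ) (hx₀ : dist (F x₀) x₀ ≤ c₀)
    (hF : ∀ x x', dist (F x) (F x') ≤ (c₁ + c₂ * (dist x x₀ + dist x' x₀)) * dist x x') :
    ∃ x, F x = x ∧ dist x x₀ ≤ ξ := by
  have hstep := dist_iterate_le_majorantSeq hc₀ hc₁ hc₂ hx₀ hF
  have hle := majorantSeq_le hc₀ hc₁ hc₂ hξ₀ hξ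
  have hcauchy : CauchySeq fun k => F^[k] x₀ := by
    refine cauchySeq_of_dist_le_of_summable _ (fun k => (dist_comm _ _).trans_le (hstep k).2) ?_
    refine summable_of_sum_range_le (c := ξ)
      (fun k => sub_nonneg.2 (majorantSeq_le_succ hc₀ hc₁ hc₂ k)) fun k => ?_
    rw [Finset.sum_range_sub (majorantSeq c₀ c₁ c₂), majorantSeq, sub_zero]
    exact hle k
  obtain ⟨x, hx⟩ := cauchySeq_tendsto_of_complete hcauchy
  have hdist : dist x x₀ ≤ ξ :=
    le_of_tendsto (hx.dist tendsto_const_nhds)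
      (Eventually.of_forall fun k => (hstep k).1.trans (hle k))
  refine ⟨x, tendsto_nhds_unique (f := fun k => F (F^[k] x₀)) (l := atTop) ?_ ?_, hdist⟩
  · have hlim : Tendsto (fun k => (c₁ + c₂ * (ξ + ξ)) * dist (F^[k] x₀) x) atTop (𝓝 0) := by
      simpa using (tendsto_iff_dist_tendsto_zero.1 hx).const_mul (c₁ + c₂ * (ξ + ξ))
    refine tendsto_iff_dist_tendsto_zero.2 (squeeze_zero (fun _ => dist_nonneg)
      (fun k => (hF _ x).trans ?_) hlim)
    have := (hstep k).1.trans (hle k)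
    gcongr
  · simp_rw [← Function.iterate_succ_apply' F]
    exact hx.comp (tendsto_add_atTop_nat 1)

end Majorant

section Kronecker

variable {n : ℕ}

lemma kronVecId_mulVec (u v : Fin n → ℝ) : kronVecId u *ᵥ v = kron u v := by
  funext p
  simp [mulVec, dotProduct, kronVecId, kron, mul_ite]

lemma kronIdVec_mulVec (u v : Fin n → ℝ) : kronIdVec u *ᵥ v = kron v u := by
  funext p
  simp [mulVec, dotProduct, kronIdVec, kron, mul_comm]

lemma kron_self_sub_kron_self (x₀ x x' : Fin n → ℝ) :
    kron x x - kron x' x' =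
      (kron x₀ (x - x') + kron (x - x') x₀) +
        (kron (x - x₀) (x - x') + kron (x - x') (x' - x₀)) := by
  funext p
  simp only [kron, Pi.sub_apply, Pi.add_apply]
  ring

lemma norm_kron_le (u v : Fin n → ℝ) : ‖kron u v‖ ≤ ‖u‖ * ‖v‖ := by
  refine (pi_norm_le_iff_of_nonneg (by positivity)).2 fun p => ?_
  rw [kron, norm_mul]
  gcongr <;> exact norm_le_pi_norm _ _

end Kronecker

section MatNorm

variable {m k : ℕ}

lemma sum_abs_le_matNorm (M : Matrix (Fin m) (Fin k) ℝ) (i : Fin m) :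
    ∑ j, |M i j| ≤ matNorm M :=
  le_ciSup (f := fun i => ∑ j, |M i j|) (Set.finite_range _).bddAbove i

lemma matNorm_nonneg (M : Matrix (Fin m) (Fin k) ℝ) : 0 ≤ matNorm M :=
  Real.iSup_nonneg fun _ => Finset.sum_nonneg fun _ _ => abs_nonneg _

lemma norm_mulVec_le_matNorm (M : Matrix (Fin m) (Fin k) ℝ) (v : Fin k → ℝ) :
    ‖M *ᵥ v‖ ≤ matNorm M * ‖v‖ := by
  refine (pi_norm_le_iff_of_nonneg (mul_nonneg (matNorm_nonneg M) (norm_nonneg v))).2 fun i => ?_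
  calc ‖(M *ᵥ v) i‖ = |∑ j, M i j * v j| := rfl
    _ ≤ ∑ j, |M i j| * ‖v‖ := by
      refine (Finset.abs_sum_le_sum_abs _ _).trans (Finset.sum_le_sum fun j _ => ?_)
      rw [abs_mul]
      gcongr
      exact norm_le_pi_norm v j
    _ = (∑ j, |M i j|) * ‖v‖ := (Finset.sum_mul _ _ _).symm
    _ ≤ matNorm M * ‖v‖ := by gcongr; exact sum_abs_le_matNorm M i

end MatNorm

section QVE

variable {n : ℕ} {a at_ e xs : Fin n → ℝ} {B Bt : Matrix (Fin n) (Fin (n * n)) ℝ}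
  {L : Matrix (Fin n) (Fin n) ℝ}

def chordMap (L : Matrix (Fin n) (Fin n) ℝ) (at_ : Fin n → ℝ)
    (Bt : Matrix (Fin n) (Fin (n * n)) ℝ) (x : Fin n → ℝ) : Fin n → ℝ :=
  x + L⁻¹ *ᵥ (at_ + Bt *ᵥ kron x x - x)

lemma eq_of_chordMap_eq_self (hL : IsUnit L) {x : Fin n → ℝ} (hx : chordMap L at_ Bt x = x) :
    x = at_ + Bt *ᵥ kron x x := by
  have hinj : Function.Injective L⁻¹.mulVec :=
    mulVec_injective_iff_isUnit.2 (isUnit_nonsing_inv_iff.2 hL)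
  have hres : L⁻¹ *ᵥ (at_ + Bt *ᵥ kron x x - x) = L⁻¹ *ᵥ 0 := by
    rw [mulVec_zero]
    exact add_eq_left.1 hx
  exact (sub_eq_zero.1 (hinj hres)).symm

lemma residual_eq_of_solution (heq : e = a + B *ᵥ kron e e) (hxs : xs = a + B *ᵥ kron xs xs)
    (heqt : e = at_ + Bt *ᵥ kron e e) :
    at_ + Bt *ᵥ kron xs xs - xs = (Bt - B) *ᵥ (kron xs xs - kron e e) := by
  rw [sub_mulVec, mulVec_sub, mulVec_sub]
  linear_combination heq - heqt - hxs

lemma residual_sub_residual (hL : L = 1 - B * (kronVecId xs + kronIdVec xs)) (x x' : Fin n → ℝ) :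
    (at_ + Bt *ᵥ kron x x - x) - (at_ + Bt *ᵥ kron x' x' - x') + L *ᵥ (x - x') =
      (Bt - B) *ᵥ (kron xs (x - x') + kron (x - x') xs) +
        Bt *ᵥ (kron (x - xs) (x - x') + kron (x - x') (x' - xs)) := by
  have hBt : Bt *ᵥ kron x x - Bt *ᵥ kron x' x' =
      Bt *ᵥ (kron xs (x - x') + kron (x - x') xs) +
        Bt *ᵥ (kron (x - xs) (x - x') + kron (x - x') (x' - xs)) := by
    rw [← mulVec_sub, kron_self_sub_kron_self xs, mulVec_add]
  rw [hL, sub_mulVec, one_mulVec, ← mulVec_mulVec, add_mulVec, kronVecId_mulVec,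
    kronIdVec_mulVec, sub_mulVec]
  linear_combination hBt

lemma chordMap_sub_chordMap (hL : L = 1 - B * (kronVecId xs + kronIdVec xs)) (hLinv : IsUnit L)
    (x x' : Fin n → ℝ) :
    chordMap L at_ Bt x - chordMap L at_ Bt x' =
      L⁻¹ *ᵥ ((Bt - B) *ᵥ (kron xs (x - x') + kron (x - x') xs) +
        Bt *ᵥ (kron (x - xs) (x - x') + kron (x - x') (x' - xs))) := by
  have hLL : L⁻¹ *ᵥ (L *ᵥ (x - x')) = x - x' := by
    rw [mulVec_mulVec, nonsing_inv_mul L ((isUnit_iff_isUnit_det L).1 hLinv), one_mulVec]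
  rw [← residual_sub_residual hL, mulVec_add, hLL, mulVec_sub, chordMap, chordMap]
  abel

lemma norm_chordMap_sub_self_le (heq : e = a + B *ᵥ kron e e)
    (hxs : xs = a + B *ᵥ kron xs xs) (heqt : e = at_ + Bt *ᵥ kron e e) :
    ‖chordMap L at_ Bt xs - xs‖ ≤
      matNorm L⁻¹ * matNorm (Bt - B) * ‖kron xs xs - kron e e‖ := by
  rw [chordMap, add_sub_cancel_left, residual_eq_of_solution heq hxs heqt, mul_assoc]
  have := matNorm_nonneg L⁻¹
  exact (norm_mulVec_le_matNorm _ _).trans (by gcongr; exact norm_mulVec_le_matNorm _ _)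

lemma norm_chordMap_sub_le (hL : L = 1 - B * (kronVecId xs + kronIdVec xs)) (hLinv : IsUnit L)
    (x x' : Fin n → ℝ) :
    ‖chordMap L at_ Bt x - chordMap L at_ Bt x'‖ ≤
      (2 * matNorm L⁻¹ * matNorm (Bt - B) * ‖xs‖ +
        matNorm L⁻¹ * matNorm Bt * (‖x - xs‖ + ‖x' - xs‖)) * ‖x - x'‖ := by
  rw [chordMap_sub_chordMap hL hLinv]
  set w := x - x'
  have hlin : ‖kron xs w + kron w xs‖ ≤ 2 * ‖xs‖ * ‖w‖ := by
    linarith [norm_add_le (kron xs w) (kron w xs), norm_kron_le xs w, norm_kron_le w xs]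
  have hquad : ‖kron (x - xs) w + kron w (x' - xs)‖ ≤ (‖x - xs‖ + ‖x' - xs‖) * ‖w‖ := by
    linarith [norm_add_le (kron (x - xs) w) (kron w (x' - xs)), norm_kron_le (x - xs) w,
      norm_kron_le w (x' - xs)]
  have := matNorm_nonneg L⁻¹
  have := matNorm_nonneg (Bt - B)
  have := matNorm_nonneg Bt
  calc _ ≤ matNorm L⁻¹ * (matNorm (Bt - B) * ‖kron xs w + kron w xs‖ +
          matNorm Bt * ‖kron (x - xs) w + kron w (x' - xs)‖) := by
        refine (norm_mulVec_le_matNorm _ _).trans ?_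
        gcongr
        exact (norm_add_le _ _).trans
          (add_le_add (norm_mulVec_le_matNorm _ _) (norm_mulVec_le_matNorm _ _))
    _ ≤ matNorm L⁻¹ * (matNorm (Bt - B) * (2 * ‖xs‖ * ‖w‖) +
          matNorm Bt * ((‖x - xs‖ + ‖x' - xs‖) * ‖w‖)) := by gcongr
    _ = _ := by ring

theorem exists_solution_norm_sub_le (heq : e = a + B *ᵥ kron e e)
    (hxs : xs = a + B *ᵥ kron xs xs) (heqt : e = at_ + Bt *ᵥ kron e e)
    (hL : L = 1 - B * (kronVecId xs + kronIdVec xs)) (hLinv : IsUnit L) {ξ : ℝ} (hξ₀ : 0 ≤ ξ)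
    (hξ : matNorm L⁻¹ * matNorm (Bt - B) * ‖kron xs xs - kron e e‖ +
        2 * matNorm L⁻¹ * matNorm (Bt - B) * ‖xs‖ * ξ + matNorm L⁻¹ * matNorm Bt * ξ ^ 2 ≤ ξ) :
    ∃ x, x = at_ + Bt *ᵥ kron x x ∧ ‖x - xs‖ ≤ ξ := by
  have := matNorm_nonneg L⁻¹
  have := matNorm_nonneg (Bt - B)
  have := matNorm_nonneg Bt
  obtain ⟨x, hfix, hx⟩ := exists_fixedPoint_dist_le_of_quadratic_majorant (F := chordMap L at_ Bt)
    (by positivity) (by positivity) (by positivity) hξ₀ hξ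
    (by rw [dist_eq_norm]; exact norm_chordMap_sub_self_le heq hxs heqt)
    (fun x x' => by simpa only [dist_eq_norm] using norm_chordMap_sub_le hL hLinv x x')
  exact ⟨x, eq_of_chordMap_eq_self hLinv hfix, by rwa [← dist_eq_norm]⟩

end QVE

section SmallRoot

-- The smaller root `(A - √(A² - 4c₂c₀)) / (2c₂)` of `c₂ t² - A t + c₀`, rationalized as in `ξ*`.
def smallRoot (c₂ A c₀ : ℝ) : ℝ := 2 * c₀ / (A + √(A ^ 2 - 4 * c₂ * c₀))

variable {c₀ c₂ A : ℝ}

lemma smallRoot_nonneg (hc₀ : 0 ≤ c₀) (hA : 0 ≤ A) : 0 ≤ smallRoot c₂ A c₀ := by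
  unfold smallRoot
  positivity

lemma two_mul_mul_smallRoot (hA : 0 ≤ A) (hD : 4 * c₂ * c₀ ≤ A ^ 2) :
    2 * c₂ * smallRoot c₂ A c₀ = A - √(A ^ 2 - 4 * c₂ * c₀) := by
  have hS := Real.sq_sqrt (sub_nonneg.2 hD)
  rcases (add_nonneg hA (Real.sqrt_nonneg (A ^ 2 - 4 * c₂ * c₀))).eq_or_lt with hden | hden
  · have hS0 : √(A ^ 2 - 4 * c₂ * c₀) = 0 := by
      linarith [Real.sqrt_nonneg (A ^ 2 - 4 * c₂ * c₀)]
    rw [smallRoot, ← hden]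
    simp only [div_zero, mul_zero]
    linarith
  · rw [smallRoot, ← mul_div_assoc, div_eq_iff hden.ne']
    linear_combination hS

lemma smallRoot_isRoot (hc₂ : 0 < c₂) (hA : 0 ≤ A) (hD : 4 * c₂ * c₀ ≤ A ^ 2) :
    c₂ * smallRoot c₂ A c₀ ^ 2 - A * smallRoot c₂ A c₀ + c₀ = 0 := by
  set S := √(A ^ 2 - 4 * c₂ * c₀)
  have hS : S ^ 2 = A ^ 2 - 4 * c₂ * c₀ := Real.sq_sqrt (sub_nonneg.2 hD)
  have hmul : smallRoot c₂ A c₀ * (A + S) = 2 * c₀ := by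
    rcases (add_nonneg hA (Real.sqrt_nonneg (A ^ 2 - 4 * c₂ * c₀))).eq_or_lt with hden | hden
    · have hS0 : S = 0 := by linarith [Real.sqrt_nonneg (A ^ 2 - 4 * c₂ * c₀)]
      have hc₀ : c₂ * c₀ = 0 := by nlinarith
      rw [← hden, mul_zero, (mul_eq_zero.1 hc₀).resolve_left hc₂.ne', mul_zero]
    · exact div_mul_cancel₀ _ hden.ne'
  linear_combination (smallRoot c₂ A c₀ / 2) * two_mul_mul_smallRoot hA hD - hmul / 2


variable {p q δ ℓ bt d : ℝ}

lemma pos_of_sensitivity_conditions (hδ : 0 ≤ δ) (hℓ : 0 ≤ ℓ)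
    (hbt : 0 ≤ bt) (hd : 0 ≤ d) (h₁ : p * δ + √(bt * d * δ) ≤ 1 / (2 * ℓ))
    (h₂ : max (1 - 2 * ℓ * bt * (1 - p)) (1 - 2 * ℓ * bt * (1 - q)) <
      2 * ℓ * δ * p + √((1 - 2 * ℓ * δ * p) ^ 2 - 4 * ℓ ^ 2 * bt * d * δ)) :
    0 < ℓ ∧ 0 < bt ∧ 0 ≤ 1 - 2 * ℓ * δ * p ∧
      4 * (ℓ * bt) * (ℓ * δ * d) ≤ (1 - 2 * ℓ * δ * p) ^ 2 := by
  have hℓpos : 0 < ℓ := by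
    refine hℓ.lt_of_ne fun hℓ0 => ?_
    subst hℓ0
    norm_num at h₂
  have hroot : 2 * ℓ * √(bt * d * δ) ≤ 1 - 2 * ℓ * δ * p := by
    have := (le_div_iff₀ (by positivity : (0 : ℝ) < 2 * ℓ)).1 h₁
    linarith
  have hA : 0 ≤ 1 - 2 * ℓ * δ * p := le_trans (by positivity) hroot
  have hD : 4 * (ℓ * bt) * (ℓ * δ * d) ≤ (1 - 2 * ℓ * δ * p) ^ 2 := by
    have := pow_le_pow_left₀ (by positivity) hroot 2
    rw [mul_pow, Real.sq_sqrt (by positivity)] at this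
    linarith
  refine ⟨hℓpos, hbt.lt_of_ne fun hbt0 => ?_, hA, hD⟩
  subst hbt0
  simp only [mul_zero, zero_mul, sub_zero, max_self, Real.sqrt_sq hA] at h₂
  linarith

lemma smallRoot_spec_of_sensitivity_conditions (hδ : 0 ≤ δ) (hℓ : 0 ≤ ℓ)
    (hbt : 0 ≤ bt) (hd : 0 ≤ d) (h₁ : p * δ + √(bt * d * δ) ≤ 1 / (2 * ℓ))
    (h₂ : max (1 - 2 * ℓ * bt * (1 - p)) (1 - 2 * ℓ * bt * (1 - q)) <
      2 * ℓ * δ * p + √((1 - 2 * ℓ * δ * p) ^ 2 - 4 * ℓ ^ 2 * bt * d * δ)) :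
    let ξ := smallRoot (ℓ * bt) (1 - 2 * ℓ * δ * p) (ℓ * δ * d)
    0 ≤ ξ ∧ ℓ * δ * d + 2 * ℓ * δ * p * ξ + ℓ * bt * ξ ^ 2 ≤ ξ ∧ ξ < 1 - p ∧ ξ < 1 - q := by
  obtain ⟨hℓpos, hbtpos, hA, hD⟩ := pos_of_sensitivity_conditions hδ hℓ hbt hd h₁ h₂
  intro ξ
  have hroot := smallRoot_isRoot (by positivity) hA hD
  have hsub := two_mul_mul_smallRoot hA hD
  have hdisc : 4 * (ℓ * bt) * (ℓ * δ * d) = 4 * ℓ ^ 2 * bt * d * δ := by ring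
  rw [hdisc] at hsub
  obtain ⟨hmax₁, hmax₂⟩ := max_lt_iff.1 h₂
  have hc : 0 < 2 * (ℓ * bt) := by positivity
  refine ⟨smallRoot_nonneg (by positivity) hA, le_of_eq (by linear_combination hroot),
    lt_of_mul_lt_mul_left (a := 2 * (ℓ * bt)) ?_ hc.le,
    lt_of_mul_lt_mul_left (a := 2 * (ℓ * bt)) ?_ hc.le⟩ <;> linarith

end SmallRoot

lemma mem_unitBox_of_norm_sub_le {n : ℕ} {x xs : Fin n → ℝ} {ξ : ℝ} (hx : ‖x - xs‖ ≤ ξ)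
    (h₁ : ξ < 1 - ‖xs‖) (h₂ : ξ < 1 - ‖(fun _ => (1 : ℝ)) - xs‖) (i : Fin n) :
    0 ≤ x i ∧ x i < 1 := by
  have hxi : |x i - xs i| ≤ ξ := (norm_le_pi_norm (x - xs) i).trans hx
  have hxs : xs i ≤ ‖xs‖ := (le_abs_self _).trans (norm_le_pi_norm xs i)
  have hexs : 1 - xs i ≤ ‖(fun _ => (1 : ℝ)) - xs‖ :=
    (le_abs_self _).trans (norm_le_pi_norm ((fun _ => (1 : ℝ)) - xs) i)
  constructor <;> linarith [abs_le.1 hxi]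

theorem stmt3_general {n : ℕ}
    (a : Fin n → ℝ) (B : Matrix (Fin n) (Fin (n * n)) ℝ)
    (xs : Fin n → ℝ)
    (at_ : Fin n → ℝ) (Bt : Matrix (Fin n) (Fin (n * n)) ℝ)
    (e : Fin n → ℝ) (he : e = fun _ => (1 : ℝ))
    (heq : e = a + B *ᵥ kron e e)
    (hxs : xs = a + B *ᵥ kron xs xs)
    (L : Matrix (Fin n) (Fin n) ℝ)
    (hL : L = 1 - B * (kronVecId xs + kronIdVec xs))
    (hLinv : IsUnit L)
    (heqt : e = at_ + Bt *ᵥ kron e e)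
    (ΔB : Matrix (Fin n) (Fin (n * n)) ℝ) (hΔB : ΔB = Bt - B)
    (δ ℓ bt d : ℝ)
    (hδ : δ = matNorm ΔB) (hℓ : ℓ = matNorm L⁻¹) (hbt : bt = matNorm Bt)
    (hd : d = ‖kron xs xs - kron e e‖)
    (hcond1 : ‖xs‖ * δ + Real.sqrt (bt * d * δ) ≤ 1 / (2 * ℓ))
    (hcond2 : max (1 - 2 * ℓ * bt * (1 - ‖xs‖)) (1 - 2 * ℓ * bt * (1 - ‖e - xs‖)) <
      2 * ℓ * δ * ‖xs‖ +
        Real.sqrt ((1 - 2 * ℓ * δ * ‖xs‖) ^ 2 - 4 * ℓ ^ 2 * bt * d * δ))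
    (huniq : ∀ x y : Fin n → ℝ,
      x = at_ + Bt *ᵥ kron x x → (∀ i, 0 ≤ x i ∧ x i < e i) →
      y = at_ + Bt *ᵥ kron y y → (∀ i, 0 ≤ y i ∧ y i < e i) → x = y)
    (xts : Fin n → ℝ)
    (hxts : xts = at_ + Bt *ᵥ kron xts xts)
    (hxts01 : ∀ i, 0 ≤ xts i ∧ xts i < e i) :
    ‖xts - xs‖ ≤ 2 * ℓ * d * δ /
      (1 - 2 * ℓ * δ * ‖xs‖ +
        Real.sqrt ((1 - 2 * ℓ * δ * ‖xs‖) ^ 2 - 4 * ℓ ^ 2 * bt * d * δ)) := by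
  subst hΔB hδ hℓ hbt hd
  obtain ⟨hξ₀, hξ, hξ₁, hξ₂⟩ := smallRoot_spec_of_sensitivity_conditions (matNorm_nonneg _)
    (matNorm_nonneg _) (matNorm_nonneg _) (norm_nonneg _) hcond1 hcond2
  obtain ⟨x, hx, hxξ⟩ := exists_solution_norm_sub_le heq hxs heqt hL hLinv hξ₀ hξ
  subst he
  rw [huniq xts x hxts hxts01 hx (mem_unitBox_of_norm_sub_le hxξ hξ₁ hξ₂)]
  convert hxξ using 1
  rw [smallRoot]
  ring_nf

/-- Theorem 2.5 of the paper: under the same hypotheses as the existence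
form, if moreover the perturbed QVE has at most one solution `x` with `0 ≤ x < e`
(as holds for the QVE of a supercritical positive regular MBT) and `x̃*` is such a
solution, then `‖x̃* − x*‖ ≤ ξ*`. -/
theorem stmt3 {n : ℕ} (hn : 1 ≤ n)
    (a : Fin n → ℝ) (B : Matrix (Fin n) (Fin (n * n)) ℝ)
    (xs : Fin n → ℝ)
    (at_ : Fin n → ℝ) (Bt : Matrix (Fin n) (Fin (n * n)) ℝ)
    (e : Fin n → ℝ) (he : e = fun _ => (1 : ℝ))
    (heq : e = a + B *ᵥ kron e e)
    (hxs : xs = a + B *ᵥ kron xs xs)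
    (hxs0 : ∀ i, 0 ≤ xs i) (hxs1 : ∀ i, xs i < e i)
    (L : Matrix (Fin n) (Fin n) ℝ)
    (hL : L = 1 - B * (kronVecId xs + kronIdVec xs))
    (hLinv : IsUnit L)
    (heqt : e = at_ + Bt *ᵥ kron e e)
    (ΔB : Matrix (Fin n) (Fin (n * n)) ℝ) (hΔB : ΔB = Bt - B)
    (δ ℓ bt d : ℝ)
    (hδ : δ = matNorm ΔB) (hℓ : ℓ = matNorm L⁻¹) (hbt : bt = matNorm Bt)
    (hd : d = ‖kron xs xs - kron e e‖)
    (hcond1 : ‖xs‖ * δ + Real.sqrt (bt * d * δ) ≤ 1 / (2 * ℓ))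
    (hcond2 : max (1 - 2 * ℓ * bt * (1 - ‖xs‖)) (1 - 2 * ℓ * bt * (1 - ‖e - xs‖)) <
      2 * ℓ * δ * ‖xs‖ +
        Real.sqrt ((1 - 2 * ℓ * δ * ‖xs‖) ^ 2 - 4 * ℓ ^ 2 * bt * d * δ))
    (huniq : ∀ x y : Fin n → ℝ,
      x = at_ + Bt *ᵥ kron x x → (∀ i, 0 ≤ x i ∧ x i < e i) →
      y = at_ + Bt *ᵥ kron y y → (∀ i, 0 ≤ y i ∧ y i < e i) → x = y)
    (xts : Fin n → ℝ)
    (hxts : xts = at_ + Bt *ᵥ kron xts xts)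
    (hxts01 : ∀ i, 0 ≤ xts i ∧ xts i < e i) :
    ‖xts - xs‖ ≤ 2 * ℓ * d * δ /
      (1 - 2 * ℓ * δ * ‖xs‖ +
        Real.sqrt ((1 - 2 * ℓ * δ * ‖xs‖) ^ 2 - 4 * ℓ ^ 2 * bt * d * δ)) :=
  stmt3_general a B xs at_ Bt e he heq hxs L hL hLinv heqt ΔB hΔB δ ℓ bt d hδ hℓ hbt hd hcond1
    hcond2 huniq xts hxts hxts01
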